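/- Let n ≥ 2 be an integer and let d₁, …, d_r be a nonempty finite list of integers, each d_i ≥ 2, whose least common multiple equals n. Then Σ_{i=1}^r φ(d_i) ≥ f(n) := (Σ_{p prime, p ∣ n} φ(p^{v_p(n)})) − ε(n). -/

import Mathlib

/-- `ε(n) = 1` if `v₂(n) = 1` and `n ≠ 2`, and `ε(n) = 0` otherwise. -/
def epsAux (n : ℕ) : ℕ := if n.factorization 2 = 1 ∧ n ≠ 2 then 1 else 0

/-- `f(n) = (Σ_{p prime, p ∣ n} φ(p^{v_p(n)})) − ε(n)`. -/
def fAux (n : ℕ) : ℕ := (∑ p ∈ n.primeFactors, (p ^ n.factorization p).totient) - epsAux n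

/-!
Everything follows from `f(lcm(a, m)) ≤ φ(a) + f(m)` by induction along the list. Up to the
case `n = 2`, the correction `ε(n)` removes exactly the one term of `f(n)` that can equal `1`,
namely `φ(2)` when `v₂(n) = 1`; the remaining terms are all at least `2`. For `n = lcm(a, m)`,
the primes with `v_p(a) ≤ v_p(m)` contribute terms already present in `f(m)`. The others
contribute terms `φ(p^{v_p(a)}) ≥ 2`, whose sum is at most their product, and by multiplicativity
of `φ` that product is at most `φ(a)`.
-/

open Nat Finset

theorem Finset.sum_le_prod_of_two_le {ι : Type*} {s : Finset ι} {f : ι → ℕ}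
    (hf : ∀ i ∈ s, 2 ≤ f i) : ∑ i ∈ s, f i ≤ ∏ i ∈ s, f i := by
  classical
  induction s using Finset.induction_on with
  | empty => simp
  | insert a s ha ih =>
    have hs : ∀ i ∈ s, 2 ≤ f i := fun i hi => hf i (mem_insert_of_mem hi)
    rw [sum_insert ha, prod_insert ha]
    rcases s.eq_empty_or_nonempty with rfl | ⟨j, hj⟩
    · simp
    · have hprod : 2 ≤ ∏ i ∈ s, f i :=
        (hs j hj).trans (single_le_prod' (fun i hi => one_le_two.trans (hs i hi)) hj)
      calc f a + ∑ i ∈ s, f i ≤ f a + ∏ i ∈ s, f i := by grw [ih hs]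
        _ ≤ f a * ∏ i ∈ s, f i := Nat.add_le_mul (hf a (mem_insert_self a s)) hprod

namespace Nat

theorem mem_primeFactors_iff_factorization_ne_zero {n p : ℕ} :
    p ∈ n.primeFactors ↔ n.factorization p ≠ 0 := by
  rw [← support_factorization, Finsupp.mem_support_iff]

theorem totient_eq_prod_totient_ordProj {a : ℕ} (ha : a ≠ 0) :
    φ a = ∏ p ∈ a.primeFactors, φ (ordProj[p] a) :=
  multiplicative_factorization φ (fun _ _ => totient_mul) totient_one ha

theorem two_le_totient_ordProj {a p : ℕ} (hp : p ∈ a.primeFactors) (h2 : ordProj[p] a ≠ 2) :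
    2 ≤ φ (ordProj[p] a) := by
  have hone : ordProj[p] a ≠ 1 :=
    (one_lt_pow (mem_primeFactors_iff_factorization_ne_zero.1 hp)
      (prime_of_mem_primeFactors hp).one_lt).ne'
  have h0 : φ (ordProj[p] a) ≠ 0 := (totient_pos.2 (ordProj_pos a p)).ne'
  have h1 : φ (ordProj[p] a) ≠ 1 := by rw [Ne, totient_eq_one_iff]; tauto
  omega

theorem sum_totient_ordProj_le_totient {a : ℕ} {s : Finset ℕ} (hs : s ⊆ a.primeFactors)
    (h2 : ∀ p ∈ s, ordProj[p] a ≠ 2) : ∑ p ∈ s, φ (ordProj[p] a) ≤ φ a := by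
  rcases eq_or_ne a 0 with rfl | ha
  · simp_all
  calc ∑ p ∈ s, φ (ordProj[p] a)
      ≤ ∏ p ∈ s, φ (ordProj[p] a) :=
        sum_le_prod_of_two_le fun p hp => two_le_totient_ordProj (hs hp) (h2 p hp)
    _ ≤ ∏ p ∈ a.primeFactors, φ (ordProj[p] a) :=
        prod_le_prod_of_subset_of_one_le' hs fun p _ _ => totient_pos.2 (ordProj_pos a p)
    _ = φ a := (totient_eq_prod_totient_ordProj ha).symm

end Nat

def fNontrivial (n : ℕ) : ℕ := ∑ p ∈ n.primeFactors with ordProj[p] n ≠ 2, φ (ordProj[p] n)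

theorem sum_totient_ordProj_eq_fNontrivial_add (n : ℕ) : ∑ p ∈ n.primeFactors, φ (ordProj[p] n) =
    fNontrivial n + if n.factorization 2 = 1 then 1 else 0 := by
  have htwo : {p ∈ n.primeFactors | ¬ordProj[p] n ≠ 2} =
      {p ∈ ({2} : Finset ℕ) | n.factorization p = 1} := by
    ext p
    simp only [mem_filter, not_not, prime_two.pow_eq_iff, mem_singleton,
      mem_primeFactors_iff_factorization_ne_zero]
    grind
  rw [fNontrivial, ← sum_filter_add_sum_filter_not _ (fun p => ordProj[p] n ≠ 2), htwo,
    filter_singleton]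
  split_ifs with h <;> simp [h]

theorem fAux_eq (n : ℕ) : fAux n = fNontrivial n + if n = 2 then 1 else 0 := by
  have h2 : n = 2 → n.factorization 2 = 1 := by rintro rfl; exact prime_two.factorization_self
  rw [fAux, epsAux, sum_totient_ordProj_eq_fNontrivial_add]
  split_ifs <;> omega

theorem fNontrivial_lcm_le {a m : ℕ} (ha : a ≠ 0) (hm : m ≠ 0) :
    fNontrivial (a.lcm m) ≤ φ a + fNontrivial m := by
  have hv : ∀ p, (a.lcm m).factorization p = max (a.factorization p) (m.factorization p) :=
    fun p => by rw [factorization_lcm ha hm]; rfl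
  rw [fNontrivial, ← sum_filter_add_sum_filter_not _
    (fun p => m.factorization p < a.factorization p), filter_filter, filter_filter]
  gcongr ?_ + ?_
  · rw [sum_congr rfl fun p hp => by rw [hv, max_eq_left (mem_filter.1 hp).2.2.le]]
    refine sum_totient_ordProj_le_totient (fun p hp => ?_) fun p hp => ?_
    · simp only [mem_filter, mem_primeFactors_iff_factorization_ne_zero] at hp ⊢
      omega
    · obtain ⟨-, h2, hlt⟩ := mem_filter.1 hp
      rwa [hv, max_eq_left hlt.le] at h2
  · rw [sum_congr rfl fun p hp => by rw [hv, max_eq_right (not_lt.1 (mem_filter.1 hp).2.2)]]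
    refine sum_le_sum_of_subset fun p hp => ?_
    simp only [mem_filter, mem_primeFactors_iff_factorization_ne_zero, hv] at hp ⊢
    obtain ⟨h0, h2, hle⟩ := hp
    rw [max_eq_right (not_lt.1 hle)] at h0 h2
    exact ⟨h0, h2⟩

theorem fAux_lcm_le (a m : ℕ) : fAux (a.lcm m) ≤ φ a + fAux m := by
  rcases eq_or_ne a 0 with rfl | ha
  · simp [fAux]
  rcases eq_or_ne m 0 with rfl | hm
  · simp [fAux]
  by_cases h2 : a.lcm m = 2
  · have hf2 : fAux 2 = 1 := by
      simp [fAux, epsAux, prime_two.primeFactors, prime_two.factorization_self]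
    rw [h2, hf2]
    exact le_add_right (totient_pos.2 (Nat.pos_of_ne_zero ha))
  calc fAux (a.lcm m) = fNontrivial (a.lcm m) := by simp [fAux_eq, h2]
    _ ≤ φ a + fNontrivial m := fNontrivial_lcm_le ha hm
    _ ≤ φ a + fAux m := by simp [fAux_eq]

theorem sum_totient_ge_f_of_lcm_general (n : ℕ) (l : List ℕ) (hlcm : l.foldr Nat.lcm 1 = n) :
    fAux n ≤ (l.map Nat.totient).sum := by
  subst hlcm
  induction l with
  | nil => simp [fAux]
  | cons a l ih =>
    rw [List.foldr_cons, List.map_cons, List.sum_cons]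
    exact (fAux_lcm_le a _).trans (Nat.add_le_add_left ih _)

/-- If `d₁, …, d_r` is a nonempty list of integers, each `≥ 2`, whose least common
multiple is `n ≥ 2`, then `Σ_i φ(d_i) ≥ f(n)`. -/
theorem sum_totient_ge_f_of_lcm (n : ℕ) (hn : 2 ≤ n) (l : List ℕ) (hl : l ≠ [])
    (hl2 : ∀ x ∈ l, 2 ≤ x) (hlcm : l.foldr Nat.lcm 1 = n) :
    fAux n ≤ (l.map Nat.totient).sum :=
  sum_totient_ge_f_of_lcm_general n l hlcm
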